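/- Let δ_d(t) = (1/(1+t))·(1 − 1/(1+t))^t if 1 + t ≤ d^α and δ_d(t) = d^{−α}(1 − d^{−α})^t if 1 + t ≥ d^α, and let I_d(t) = ∫_1^d k^{−α}(1 − k^{−α})^t dk. Then: (i) if 0 < α < 1, for every τ > 0, δ_d(τ·d^α)/I_d(τ·d^α) → 0 as d → ∞; (ii) if α = 1, for every τ ∈ (0, 1], δ_d(d^τ)/I_d(d^τ) → 0 as d → ∞; (iii) if α > 1, the iterated limit lim_{t→∞} lim_{d→∞} δ_d(t)/I_d(t) equals 0 (where t ranges over nonnegative integers and the inner limit exists). -/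

import Mathlib

/-!
Write `f_t(k) = k^{-α}(1 - k^{-α})^t`. Both branches of `δ_d(t)` have the form `x(1 - x)^t` with
`x ∈ [0, 1]`, so `δ_d(t) ≤ max(1/t, d^{-α})`. On a window `[b/2, b] ⊆ [1, d]` the integrand is at
least `b^{-α}(1 - (b/2)^{-α})^t ≥ b^{-α} exp(-2t (b/2)^{-α})`. In regimes (i) and (ii) the window
`[d/2, d]` gives `I_d(t) ≳ d^{1-α}`, so the ratio is `O(1/d)`, resp. `O(d^{-τ})`. For `α > 1` the
integrand is integrable on `(1, ∞)`, so the inner limit is `δ_∞(t)/I_∞(t)` with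
`δ_∞(t) = (1/(1+t))(1 - 1/(1+t))^t ≤ 1/(1+t)`, and the window `[s, 2s]` with `s^α = 1 + t` gives
`I_∞(t) ≳ s/(1+t)`, so the limit ratio is `O((1+t)^{-1/α})`.
-/

open Filter MeasureTheory Real Set Topology

/- `errorBound α d t` and `truncatedIntegral α d t` are `δ_d(t)` and `I_d(t)`; the summand
`k^{-α}(1 - k^{-α})^t` is `decayTerm t (k ^ (-α))`. -/

noncomputable section

def decayTerm (t x : ℝ) : ℝ := x * (1 - x) ^ t

def errorBound (α : ℝ) (d : ℕ) (t : ℝ) : ℝ :=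
  if 1 + t ≤ (d : ℝ) ^ α then decayTerm t (1 / (1 + t)) else decayTerm t ((d : ℝ) ^ (-α))

def truncatedIntegral (α : ℝ) (d : ℕ) (t : ℝ) : ℝ :=
  ∫ k in (1 : ℝ)..(d : ℝ), decayTerm t (k ^ (-α))

end

lemma exp_neg_two_mul_le_one_sub_rpow {x s : ℝ} (hx0 : 0 ≤ x) (hx : x ≤ 1 / 2) (hs : 0 ≤ s) :
    exp (-(2 * s * x)) ≤ (1 - x) ^ s := by
  have hx' : exp (-(2 * x)) ≤ 1 - x := by
    rw [← mul_le_mul_iff_of_pos_right (exp_pos (2 * x)), ← exp_add, neg_add_cancel, exp_zero]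
    nlinarith [add_one_le_exp (2 * x), exp_pos (2 * x)]
  calc exp (-(2 * s * x)) = exp (-(2 * x)) ^ s := by rw [← exp_mul]; ring_nf
    _ ≤ (1 - x) ^ s := rpow_le_rpow (exp_pos _).le hx' hs

lemma rpow_neg_mem_Icc {k α : ℝ} (hk : 1 ≤ k) (hα : 0 ≤ α) : k ^ (-α) ∈ Icc (0 : ℝ) 1 :=
  ⟨rpow_nonneg (by linarith) _, rpow_le_one_of_one_le_of_nonpos hk (neg_nonpos.2 hα)⟩

lemma one_div_one_add_mem_Icc {t : ℝ} (ht : 0 ≤ t) : 1 / (1 + t) ∈ Icc (0 : ℝ) 1 :=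
  ⟨by positivity, (div_le_one (by linarith)).2 (by linarith)⟩

section DecayTerm

variable {t x : ℝ}

lemma decayTerm_nonneg (hx : x ∈ Icc (0 : ℝ) 1) : 0 ≤ decayTerm t x :=
  mul_nonneg hx.1 (rpow_nonneg (sub_nonneg.2 hx.2) t)

lemma decayTerm_le (hx : x ∈ Icc (0 : ℝ) 1) (ht : 0 ≤ t) : decayTerm t x ≤ x :=
  mul_le_of_le_one_right hx.1 (rpow_le_one (sub_nonneg.2 hx.2) (by linarith [hx.1]) ht)

end DecayTerm

section ErrorBound

variable {α t : ℝ} {d : ℕ}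

lemma errorBound_nonneg (hα : 0 ≤ α) (hd : 1 ≤ (d : ℝ)) (ht : 0 ≤ t) :
    0 ≤ errorBound α d t := by
  unfold errorBound
  split_ifs
  · exact decayTerm_nonneg (one_div_one_add_mem_Icc ht)
  · exact decayTerm_nonneg (rpow_neg_mem_Icc hd hα)

lemma errorBound_le_max (hα : 0 ≤ α) (hd : 1 ≤ (d : ℝ)) (ht : 0 < t) :
    errorBound α d t ≤ max t⁻¹ ((d : ℝ) ^ (-α)) := by
  unfold errorBound
  split_ifs
  · calc decayTerm t (1 / (1 + t))
        ≤ 1 / (1 + t) := decayTerm_le (one_div_one_add_mem_Icc ht.le) ht.le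
      _ ≤ t⁻¹ := by rw [← one_div]; exact one_div_le_one_div_of_le ht (by linarith)
      _ ≤ _ := le_max_left _ _
  · exact (decayTerm_le (rpow_neg_mem_Icc hd hα) ht.le).trans (le_max_right _ _)

lemma errorBound_eventually_eq (hα : 0 < α) (t : ℝ) :
    ∀ᶠ d : ℕ in atTop, errorBound α d t = decayTerm t (1 / (1 + t)) := by
  filter_upwards [((tendsto_rpow_atTop hα).comp tendsto_natCast_atTop_atTop).eventually_ge_atTop
    (1 + t)] with d hd
  exact if_pos hd

end ErrorBound

section Integral

variable {α t : ℝ}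

lemma continuousOn_decayTerm_rpow_neg (ht : 0 ≤ t) :
    ContinuousOn (fun k : ℝ => decayTerm t (k ^ (-α))) (Ici 1) := by
  have h : ContinuousOn (fun k : ℝ => k ^ (-α)) (Ici 1) :=
    continuousOn_id.rpow_const fun k hk => Or.inl (by simp only [mem_Ici] at hk; positivity)
  exact h.mul ((continuousOn_const.sub h).rpow_const fun _ _ => Or.inr ht)

lemma intervalIntegrable_decayTerm_rpow_neg (ht : 0 ≤ t) {a b : ℝ} (ha : 1 ≤ a) (hab : a ≤ b) :
    IntervalIntegrable (fun k : ℝ => decayTerm t (k ^ (-α))) volume a b :=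
  ((continuousOn_decayTerm_rpow_neg ht).mono (by
    rw [uIcc_of_le hab]; exact fun k hk => ha.trans hk.1)).intervalIntegrable

lemma window_le_integral_decayTerm (hα : 0 ≤ α) (ht : 0 ≤ t) {a b d : ℝ} (ha : 1 ≤ a)
    (hab : a ≤ b) (hbd : b ≤ d) :
    (b - a) * (b ^ (-α) * (1 - a ^ (-α)) ^ t) ≤ ∫ k in (1 : ℝ)..d, decayTerm t (k ^ (-α)) := by
  have hpointwise : ∀ k ∈ Icc a b, b ^ (-α) * (1 - a ^ (-α)) ^ t ≤ decayTerm t (k ^ (-α)) := by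
    intro k hk
    have ha' := rpow_neg_mem_Icc ha hα
    have hanti : ∀ {u v : ℝ}, 1 ≤ u → u ≤ v → v ^ (-α) ≤ u ^ (-α) := fun hu huv =>
      rpow_le_rpow_of_nonpos (by linarith) huv (neg_nonpos.2 hα)
    exact mul_le_mul (hanti (ha.trans hk.1) hk.2)
      (rpow_le_rpow (sub_nonneg.2 ha'.2) (by linarith [hanti ha hk.1]) ht)
      (rpow_nonneg (sub_nonneg.2 ha'.2) t) (rpow_neg_mem_Icc (ha.trans hk.1) hα).1
  calc (b - a) * (b ^ (-α) * (1 - a ^ (-α)) ^ t)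
      = ∫ _ in a..b, b ^ (-α) * (1 - a ^ (-α)) ^ t := by
        rw [intervalIntegral.integral_const, smul_eq_mul]
    _ ≤ ∫ k in a..b, decayTerm t (k ^ (-α)) := intervalIntegral.integral_mono_on hab
        intervalIntegrable_const (intervalIntegrable_decayTerm_rpow_neg ht ha hab) hpointwise
    _ ≤ ∫ k in (1 : ℝ)..d, decayTerm t (k ^ (-α)) := by
      refine intervalIntegral.integral_mono_interval ha hab hbd ?_
        (intervalIntegrable_decayTerm_rpow_neg ht le_rfl (by linarith))
      filter_upwards [ae_restrict_mem measurableSet_Ioc] with k hk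
      exact decayTerm_nonneg (rpow_neg_mem_Icc hk.1.le hα)

lemma half_window_le_integral_decayTerm (hα : 0 ≤ α) (ht : 0 ≤ t) {b d c : ℝ} (hb : 2 ≤ b)
    (hbd : b ≤ d) (hhalf : (b / 2) ^ (-α) ≤ 1 / 2) (hc : 2 * t * (b / 2) ^ (-α) ≤ c) :
    b / 2 * (b ^ (-α) * exp (-c)) ≤ ∫ k in (1 : ℝ)..d, decayTerm t (k ^ (-α)) := by
  have hexp : exp (-c) ≤ (1 - (b / 2) ^ (-α)) ^ t :=
    (exp_le_exp.2 (neg_le_neg hc)).trans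
      (exp_neg_two_mul_le_one_sub_rpow (rpow_nonneg (by linarith) _) hhalf ht)
  calc b / 2 * (b ^ (-α) * exp (-c))
      ≤ (b - b / 2) * (b ^ (-α) * (1 - (b / 2) ^ (-α)) ^ t) := by
        rw [sub_half]; gcongr
    _ ≤ _ := window_le_integral_decayTerm hα ht (by linarith) (by linarith) hbd

lemma integrableOn_decayTerm_rpow_neg (hα : 1 < α) (ht : 0 ≤ t) :
    IntegrableOn (fun k : ℝ => decayTerm t (k ^ (-α))) (Ioi 1) := by
  refine (integrableOn_Ioi_rpow_of_lt (neg_lt_neg hα) one_pos).mono'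
    (by unfold decayTerm; fun_prop) ?_
  filter_upwards [ae_restrict_mem measurableSet_Ioi] with k hk
  have hk' := rpow_neg_mem_Icc hk.le (by linarith : (0 : ℝ) ≤ α)
  rw [norm_of_nonneg (decayTerm_nonneg hk')]
  exact decayTerm_le hk' ht

lemma tendsto_truncatedIntegral (hα : 1 < α) (ht : 0 ≤ t) :
    Tendsto (fun d : ℕ => truncatedIntegral α d t) atTop
      (𝓝 (∫ k in Ioi 1, decayTerm t (k ^ (-α)))) :=
  intervalIntegral_tendsto_integral_Ioi 1 (integrableOn_decayTerm_rpow_neg hα ht)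
    tendsto_natCast_atTop_atTop

lemma window_le_integral_Ioi_decayTerm (hα : 1 < α) (ht : 0 ≤ t) {a b : ℝ} (ha : 1 ≤ a)
    (hab : a ≤ b) :
    (b - a) * (b ^ (-α) * (1 - a ^ (-α)) ^ t) ≤ ∫ k in Ioi 1, decayTerm t (k ^ (-α)) :=
  ge_of_tendsto (tendsto_truncatedIntegral hα ht) <| by
    filter_upwards [tendsto_natCast_atTop_atTop.eventually_ge_atTop b] with d hd
    exact window_le_integral_decayTerm (by linarith) ht ha hab hd

lemma integral_Ioi_decayTerm_pos (hα : 1 < α) (ht : 0 ≤ t) :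
    0 < ∫ k in Ioi 1, decayTerm t (k ^ (-α)) := by
  refine lt_of_lt_of_le ?_ (window_le_integral_Ioi_decayTerm hα ht one_le_two
    (by norm_num : (2 : ℝ) ≤ 3))
  have h2 : (2 : ℝ) ^ (-α) < 1 := rpow_lt_one_of_one_lt_of_neg one_lt_two (by linarith)
  have := rpow_pos_of_pos (sub_pos.2 h2) t
  positivity

end Integral

section Regimes

variable {α : ℝ}

lemma tendsto_errorBound_div_truncatedIntegral_of_time_rpow_self (hα : 0 < α) {τ : ℝ}
    (hτ : 0 < τ) :
    Tendsto (fun d : ℕ => errorBound α d (τ * (d : ℝ) ^ α) /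
      truncatedIntegral α d (τ * (d : ℝ) ^ α)) atTop (𝓝 0) := by
  set K := max τ⁻¹ 1
  set c := 2 * τ * 2 ^ α with hc
  have hbound : ∀ᶠ d : ℕ in atTop,
      0 ≤ errorBound α d (τ * (d : ℝ) ^ α) / truncatedIntegral α d (τ * (d : ℝ) ^ α) ∧
      errorBound α d (τ * (d : ℝ) ^ α) / truncatedIntegral α d (τ * (d : ℝ) ^ α) ≤
        2 * K / exp (-c) / d := by
    have hhalf : Tendsto (fun d : ℕ => ((d : ℝ) / 2) ^ (-α)) atTop (𝓝 0) :=
      (tendsto_rpow_neg_atTop hα).comp (tendsto_natCast_atTop_atTop.atTop_div_const two_pos)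
    filter_upwards [tendsto_natCast_atTop_atTop.eventually_ge_atTop (2 : ℝ),
      hhalf.eventually (eventually_le_nhds one_half_pos)] with d hd hdhalf
    set D : ℝ := (d : ℝ)
    have hD : 0 < D := by linarith
    have hDα : 0 < D ^ (-α) := rpow_pos_of_pos hD _
    have ht : 0 < τ * D ^ α := by positivity
    have hexponent : 2 * (τ * D ^ α) * (D / 2) ^ (-α) = c := by
      rw [hc, div_rpow hD.le zero_le_two, rpow_neg hD.le, rpow_neg zero_le_two]
      field_simp [(rpow_pos_of_pos two_pos α).ne']
    have hlower : 0 < D / 2 * (D ^ (-α) * exp (-c)) := by positivity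
    have hI := half_window_le_integral_decayTerm hα.le ht.le hd le_rfl hdhalf hexponent.le
    have hδ : errorBound α d (τ * D ^ α) ≤ K * D ^ (-α) := by
      refine (errorBound_le_max hα.le (by linarith) ht).trans (max_le ?_ ?_)
      · rw [mul_inv, ← rpow_neg hD.le]
        exact mul_le_mul_of_nonneg_right (le_max_left _ _) hDα.le
      · exact le_mul_of_one_le_left hDα.le (le_max_right _ _)
    refine ⟨div_nonneg (errorBound_nonneg hα.le (by linarith) ht.le) (hlower.le.trans hI), ?_⟩
    calc _ ≤ K * D ^ (-α) / (D / 2 * (D ^ (-α) * exp (-c))) :=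
          div_le_div₀ (by positivity) hδ hlower hI
      _ = 2 * K / exp (-c) / D := by field_simp
  exact squeeze_zero' (hbound.mono fun _ h => h.1) (hbound.mono fun _ h => h.2)
    (tendsto_const_nhds.div_atTop tendsto_natCast_atTop_atTop)

lemma tendsto_errorBound_div_truncatedIntegral_one_of_time_rpow {τ : ℝ} (hτ0 : 0 < τ)
    (hτ1 : τ ≤ 1) :
    Tendsto (fun d : ℕ => errorBound 1 d ((d : ℝ) ^ τ) /
      truncatedIntegral 1 d ((d : ℝ) ^ τ)) atTop (𝓝 0) := by
  have hbound : ∀ᶠ d : ℕ in atTop,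
      0 ≤ errorBound 1 d ((d : ℝ) ^ τ) / truncatedIntegral 1 d ((d : ℝ) ^ τ) ∧
      errorBound 1 d ((d : ℝ) ^ τ) / truncatedIntegral 1 d ((d : ℝ) ^ τ) ≤
        2 * exp 4 * (d : ℝ) ^ (-τ) := by
    filter_upwards [tendsto_natCast_atTop_atTop.eventually_ge_atTop (4 : ℝ)] with d hd
    set D : ℝ := (d : ℝ)
    have hD : 0 < D := by linarith
    have ht : 0 < D ^ τ := rpow_pos_of_pos hD _
    have htD : D ^ τ ≤ D := by
      simpa using rpow_le_rpow_of_exponent_le (by linarith : 1 ≤ D) hτ1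
    have hhalf : (D / 2) ^ (-(1 : ℝ)) = 2 / D := by rw [rpow_neg_one, inv_div]
    have hexponent : 2 * D ^ τ * (D / 2) ^ (-(1 : ℝ)) ≤ 4 := by
      rw [hhalf, show 2 * D ^ τ * (2 / D) = 4 * (D ^ τ / D) by ring]
      linarith [(div_le_one hD).2 htD]
    have hI := half_window_le_integral_decayTerm (b := D) (d := D) zero_le_one ht.le
      (by linarith) le_rfl (by rw [hhalf, div_le_div_iff₀ hD two_pos]; linarith) hexponent
    rw [rpow_neg_one, show D / 2 * (D⁻¹ * exp (-4)) = exp (-4) / 2 by field_simp] at hI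
    have hδ : errorBound 1 d (D ^ τ) ≤ D ^ (-τ) := by
      refine (errorBound_le_max zero_le_one (by linarith) ht).trans (max_le ?_ ?_)
      · rw [rpow_neg hD.le]
      · exact rpow_le_rpow_of_exponent_le (by linarith) (neg_le_neg hτ1)
    refine ⟨div_nonneg (errorBound_nonneg zero_le_one (by linarith) ht.le)
      ((by positivity : (0 : ℝ) ≤ exp (-4) / 2).trans hI), ?_⟩
    calc _ ≤ D ^ (-τ) / (exp (-4) / 2) := div_le_div₀ (by positivity) hδ (by positivity) hI
      _ = 2 * exp 4 * D ^ (-τ) := by rw [exp_neg]; field_simp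
  have hlim : Tendsto (fun d : ℕ => 2 * exp 4 * (d : ℝ) ^ (-τ)) atTop (𝓝 0) := by
    simpa using ((tendsto_rpow_neg_atTop hτ0).comp tendsto_natCast_atTop_atTop).const_mul
      (2 * exp 4)
  exact squeeze_zero' (hbound.mono fun _ h => h.1) (hbound.mono fun _ h => h.2) hlim

lemma tendsto_errorBound_div_truncatedIntegral_of_one_lt (hα : 1 < α) {t : ℝ} (ht : 0 ≤ t) :
    Tendsto (fun d : ℕ => errorBound α d t / truncatedIntegral α d t) atTop
      (𝓝 (decayTerm t (1 / (1 + t)) / ∫ k in Ioi 1, decayTerm t (k ^ (-α)))) :=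
  (tendsto_const_nhds.div (tendsto_truncatedIntegral hα ht)
    (integral_Ioi_decayTerm_pos hα ht).ne').congr'
    ((errorBound_eventually_eq (α := α) (by linarith) t).mono fun d hd => by
      simp only [Pi.div_apply, hd])

lemma tendsto_decayTerm_div_integral_Ioi (hα : 1 < α) :
    Tendsto (fun t : ℝ => decayTerm t (1 / (1 + t)) / ∫ k in Ioi 1, decayTerm t (k ^ (-α)))
      atTop (𝓝 0) := by
  have hbound : ∀ᶠ t : ℝ in atTop,
      0 ≤ decayTerm t (1 / (1 + t)) / ∫ k in Ioi 1, decayTerm t (k ^ (-α)) ∧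
      decayTerm t (1 / (1 + t)) / ∫ k in Ioi 1, decayTerm t (k ^ (-α)) ≤
        2 ^ α * exp 2 / (1 + t) ^ α⁻¹ := by
    filter_upwards [eventually_ge_atTop 1] with t ht
    set s := (1 + t) ^ α⁻¹
    have hs : 1 ≤ s := one_le_rpow (by linarith) (by positivity)
    have hsα : s ^ (-α) = 1 / (1 + t) := by
      rw [rpow_neg (by linarith), rpow_inv_rpow (by linarith) (by linarith), one_div]
    have hexp : exp (-2) ≤ (1 - s ^ (-α)) ^ t := by
      rw [hsα]
      refine (exp_le_exp.2 ?_).trans (exp_neg_two_mul_le_one_sub_rpow (by positivity)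
        ((div_le_div_iff₀ (by linarith) two_pos).2 (by linarith)) (by linarith))
      rw [neg_le_neg_iff, mul_one_div, mul_div_assoc]
      linarith [(div_le_one (by linarith : 0 < 1 + t)).2 (by linarith : t ≤ 1 + t)]
    have hlower : s * ((2 * s) ^ (-α) * exp (-2)) ≤ ∫ k in Ioi 1, decayTerm t (k ^ (-α)) := by
      refine le_trans ?_ (window_le_integral_Ioi_decayTerm hα (by linarith) hs
        (by linarith : s ≤ 2 * s))
      rw [show 2 * s - s = s by ring]
      gcongr
    have hs2 : (2 * s) ^ (-α) = (2 ^ α)⁻¹ * s ^ (-α) := by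
      rw [mul_rpow zero_le_two (by linarith), rpow_neg zero_le_two]
    have hsα0 : 0 < s ^ (-α) := rpow_pos_of_pos (by linarith) _
    have hlower0 : 0 < s * ((2 * s) ^ (-α) * exp (-2)) := by rw [hs2]; positivity
    have hx := one_div_one_add_mem_Icc (by linarith : (0 : ℝ) ≤ t)
    refine ⟨div_nonneg (decayTerm_nonneg hx) (hlower0.le.trans hlower), ?_⟩
    calc _ ≤ 1 / (1 + t) / (s * ((2 * s) ^ (-α) * exp (-2))) :=
          div_le_div₀ hx.1 (decayTerm_le hx (by linarith)) hlower0 hlower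
      _ = 2 ^ α * exp 2 / s := by
          rw [← hsα, hs2, exp_neg]
          field_simp
  have hs : Tendsto (fun t : ℝ => (1 + t) ^ α⁻¹) atTop atTop :=
    (tendsto_rpow_atTop (by positivity)).comp (tendsto_atTop_add_const_left _ 1 tendsto_id)
  exact squeeze_zero' (hbound.mono fun _ h => h.1) (hbound.mono fun _ h => h.2)
    (tendsto_const_nhds.div_atTop hs)

end Regimes

theorem stmt7 (α : ℝ) (hα : 0 < α) :
    let δ : ℕ → ℝ → ℝ := fun d t =>
      if 1 + t ≤ (d : ℝ) ^ α
        then (1 / (1 + t)) * (1 - 1 / (1 + t)) ^ t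
        else (d : ℝ) ^ (-α) * (1 - (d : ℝ) ^ (-α)) ^ t
    let I : ℕ → ℝ → ℝ := fun d t =>
      ∫ k in (1 : ℝ)..(d : ℝ), k ^ (-α) * (1 - k ^ (-α)) ^ t
    (α < 1 → ∀ τ : ℝ, 0 < τ →
      Tendsto (fun d : ℕ => δ d (τ * (d : ℝ) ^ α) / I d (τ * (d : ℝ) ^ α))
        atTop (nhds 0)) ∧
    (α = 1 → ∀ τ : ℝ, 0 < τ → τ ≤ 1 →
      Tendsto (fun d : ℕ => δ d ((d : ℝ) ^ τ) / I d ((d : ℝ) ^ τ))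
        atTop (nhds 0)) ∧
    (1 < α → ∃ L : ℕ → ℝ,
      (∀ t : ℕ, Tendsto (fun d : ℕ => δ d t / I d t) atTop (nhds (L t))) ∧
      Tendsto L atTop (nhds 0)) := by
  refine ⟨fun _ τ hτ => tendsto_errorBound_div_truncatedIntegral_of_time_rpow_self hα hτ,
    fun hα1 τ hτ0 hτ1 => ?_, fun hα1 => ?_⟩
  · subst hα1
    exact tendsto_errorBound_div_truncatedIntegral_one_of_time_rpow hτ0 hτ1
  · exact ⟨_, fun t => tendsto_errorBound_div_truncatedIntegral_of_one_lt hα1 t.cast_nonneg,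
      (tendsto_decayTerm_div_integral_Ioi hα1).comp tendsto_natCast_atTop_atTop⟩
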